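/- Let D and D̃ be dictionaries with ‖D − D̃‖_{1,2} ≤ λ, let a* be a minimizer of the LASSO objective for D at x and ã* a minimizer of the LASSO objective for D̃ at x. Then | ‖D a*‖_2² − ‖D ã*‖_2² | ≤ (‖x‖_2 + 3) ‖x‖_2³ · ‖D − D̃‖_{1,2} / λ. -/

import Mathlib

/-!
Rescaling a LASSO minimiser `a` by `t ≥ 0` makes the objective a quadratic in `t` that is
minimal at `t = 1`; its vanishing derivative gives `‖D a‖² = ‖x‖² - 2 f_D(a)`, so the
reconstruction norm is determined by the optimal value. Comparing with `z = 0` gives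
`λ ‖a‖₁ ≤ ‖x‖² / 2`. Replacing `D` by `D̃` moves the residual at a fixed `z` by at most
`‖D - D̃‖_{1,2} ‖z‖₁`, which at either minimiser is at most `r := ‖D - D̃‖_{1,2} ‖x‖² / (2λ)`.
Hence the two optimal values, and with them `‖D a‖²` and `‖D̃ ã‖²`, differ by `O(‖x‖ r + r²)`,
as do `‖D ã‖²` and `‖D̃ ã‖²`; finally `r ≤ ‖x‖²` absorbs the quadratic terms.
-/

open Finset Matrix

noncomputable def norm2 {ι : Type*} [Fintype ι] (v : ι → ℝ) : ℝ :=
  Real.sqrt (∑ i, v i ^ 2)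

noncomputable def norm1 {ι : Type*} [Fintype ι] (v : ι → ℝ) : ℝ :=
  ∑ i, |v i|

noncomputable def norm0 {ι : Type*} (v : ι → ℝ) : ℕ :=
  Set.ncard {i | v i ≠ 0}

noncomputable def dot {ι : Type*} [Fintype ι] (u v : ι → ℝ) : ℝ :=
  ∑ i, u i * v i

def col {d m : ℕ} (D : Matrix (Fin d) (Fin m) ℝ) (i : Fin m) : Fin d → ℝ :=
  fun r => D r i

def IsDictionary {d m : ℕ} (D : Matrix (Fin d) (Fin m) ℝ) : Prop :=
  ∀ i, norm2 (_root_.col D i) = 1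

noncomputable def norm12 {d m : ℕ} (E : Matrix (Fin d) (Fin m) ℝ) : ℝ :=
  ⨆ i : Fin m, norm2 (_root_.col E i)

noncomputable def lassoObj {d m : ℕ} (lam : ℝ) (D : Matrix (Fin d) (Fin m) ℝ)
    (x : Fin d → ℝ) (z : Fin m → ℝ) : ℝ :=
  (1/2) * (norm2 (x - D.mulVec z))^2 + lam * norm1 z

def IsLassoMin {d m : ℕ} (lam : ℝ) (D : Matrix (Fin d) (Fin m) ℝ)
    (x : Fin d → ℝ) (a : Fin m → ℝ) : Prop :=
  ∀ z, lassoObj lam D x a ≤ lassoObj lam D x z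

def Incoherent {d m : ℕ} (mu : ℝ) (D : Matrix (Fin d) (Fin m) ℝ) : Prop :=
  ∀ i j, i ≠ j → |dot (_root_.col D i) (_root_.col D j)| ≤ mu / Real.sqrt d

noncomputable def kMargin {d m : ℕ} (lam : ℝ) (k : ℕ) (D : Matrix (Fin d) (Fin m) ℝ)
    (x : Fin d → ℝ) (a : Fin m → ℝ) : ℝ :=
  ⨆ I : {I : Finset (Fin m) // I.card = m - k},
    ⨅ j : {j : Fin m // j ∈ I.1}, (lam - |dot (_root_.col D j.1) (x - D.mulVec a)|)

section Norm2

variable {ι : Type*} [Fintype ι]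

lemma norm2_eq_norm_toLp (v : ι → ℝ) : norm2 v = ‖WithLp.toLp 2 v‖ := by
  simp [norm2, EuclideanSpace.norm_eq]

lemma norm2_nonneg (v : ι → ℝ) : 0 ≤ norm2 v := Real.sqrt_nonneg _

lemma sq_norm2 (v : ι → ℝ) : norm2 v ^ 2 = ∑ i, v i ^ 2 :=
  Real.sq_sqrt (by positivity)

lemma norm2_sub_comm (u v : ι → ℝ) : norm2 (u - v) = norm2 (v - u) := by
  simp only [norm2_eq_norm_toLp, WithLp.toLp_sub, norm_sub_rev]

lemma abs_norm2_sub_norm2_le (u v : ι → ℝ) : |norm2 u - norm2 v| ≤ norm2 (u - v) := by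
  simpa only [norm2_eq_norm_toLp, WithLp.toLp_sub] using abs_norm_sub_norm_le _ _

lemma norm2_sum_smul_le {κ : Type*} [Fintype κ] (c : κ → ℝ) (v : κ → ι → ℝ) :
    norm2 (∑ k, c k • v k) ≤ ∑ k, |c k| * norm2 (v k) := by
  simp only [norm2_eq_norm_toLp, WithLp.toLp_sum, WithLp.toLp_smul]
  refine (norm_sum_le _ _).trans (Finset.sum_le_sum fun k _ => ?_)
  rw [norm_smul, Real.norm_eq_abs]

lemma sq_norm2_sub_smul (u v : ι → ℝ) (t : ℝ) :
    norm2 (u - t • v) ^ 2 = norm2 u ^ 2 - 2 * t * dot u v + t ^ 2 * norm2 v ^ 2 := by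
  simp only [sq_norm2, dot, Finset.mul_sum, ← Finset.sum_sub_distrib, ← Finset.sum_add_distrib]
  refine Finset.sum_congr rfl fun i _ => ?_
  simp only [Pi.sub_apply, Pi.smul_apply, smul_eq_mul]
  ring

lemma norm1_smul {t : ℝ} (ht : 0 ≤ t) (v : ι → ℝ) : norm1 (t • v) = t * norm1 v := by
  simp only [norm1, Finset.mul_sum, Pi.smul_apply, smul_eq_mul, abs_mul, abs_of_nonneg ht]

lemma norm1_nonneg (v : ι → ℝ) : 0 ≤ norm1 v :=
  Finset.sum_nonneg fun _ _ => abs_nonneg _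

end Norm2

section Norm12

variable {d m : ℕ}

lemma norm12_nonneg (E : Matrix (Fin d) (Fin m) ℝ) : 0 ≤ norm12 E :=
  Real.iSup_nonneg fun _ => norm2_nonneg _

lemma norm2_col_le_norm12 (E : Matrix (Fin d) (Fin m) ℝ) (i : Fin m) :
    norm2 (_root_.col E i) ≤ norm12 E :=
  le_ciSup (f := fun i => norm2 (_root_.col E i)) (Finite.bddAbove_range _) i

lemma norm12_sub_comm (E F : Matrix (Fin d) (Fin m) ℝ) : norm12 (E - F) = norm12 (F - E) := by
  unfold norm12
  congr 1 with i
  exact norm2_sub_comm (_root_.col E i) (_root_.col F i)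

lemma mulVec_eq_sum_smul_col (E : Matrix (Fin d) (Fin m) ℝ) (z : Fin m → ℝ) :
    E *ᵥ z = ∑ i, z i • _root_.col E i := by
  ext r
  simp [Matrix.mulVec, dotProduct, _root_.col, mul_comm]

lemma norm2_mulVec_le (E : Matrix (Fin d) (Fin m) ℝ) (z : Fin m → ℝ) :
    norm2 (E *ᵥ z) ≤ norm12 E * norm1 z := by
  rw [mulVec_eq_sum_smul_col, norm1, Finset.mul_sum]
  refine (norm2_sum_smul_le _ _).trans (Finset.sum_le_sum fun i _ => ?_)
  rw [mul_comm (norm12 E)]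
  exact mul_le_mul_of_nonneg_left (norm2_col_le_norm12 E i) (abs_nonneg _)

lemma abs_norm2_mulVec_sub_le (E F : Matrix (Fin d) (Fin m) ℝ) (z : Fin m → ℝ) :
    |norm2 (E *ᵥ z) - norm2 (F *ᵥ z)| ≤ norm12 (E - F) * norm1 z := by
  refine (abs_norm2_sub_norm2_le _ _).trans ?_
  rw [← Matrix.sub_mulVec]
  exact norm2_mulVec_le _ _

lemma norm2_residual_le_add (E F : Matrix (Fin d) (Fin m) ℝ) (x : Fin d → ℝ) (z : Fin m → ℝ) :
    norm2 (x - E *ᵥ z) ≤ norm2 (x - F *ᵥ z) + norm12 (E - F) * norm1 z := by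
  have h := abs_norm2_sub_norm2_le (x - E *ᵥ z) (x - F *ᵥ z)
  rw [sub_sub_sub_cancel_left, norm2_sub_comm (F *ᵥ z), ← Matrix.sub_mulVec] at h
  linarith [(abs_le.mp h).2, norm2_mulVec_le (E - F) z]

end Norm12

section Lasso

variable {d m : ℕ} {lam : ℝ} {D E F : Matrix (Fin d) (Fin m) ℝ} {x : Fin d → ℝ}
  {a b : Fin m → ℝ}

lemma lassoObj_smul (z : Fin m → ℝ) {t : ℝ} (ht : 0 ≤ t) :
    lassoObj lam D x (t • z) =
      (norm2 x ^ 2 - 2 * t * dot x (D *ᵥ z) + t ^ 2 * norm2 (D *ᵥ z) ^ 2) / 2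
        + t * (lam * norm1 z) := by
  rw [lassoObj, Matrix.mulVec_smul, sq_norm2_sub_smul, norm1_smul ht]
  ring

lemma lassoObj_zero : lassoObj lam D x 0 = norm2 x ^ 2 / 2 := by
  simpa using lassoObj_smul (lam := lam) (D := D) (x := x) 0 le_rfl

namespace IsLassoMin

lemma lassoObj_le (ha : IsLassoMin lam D x a) : lassoObj lam D x a ≤ norm2 x ^ 2 / 2 :=
  lassoObj_zero (lam := lam) (D := D) ▸ ha 0

lemma lam_mul_norm1_le (ha : IsLassoMin lam D x a) : lam * norm1 a ≤ norm2 x ^ 2 / 2 := by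
  have h := ha.lassoObj_le
  rw [lassoObj] at h
  nlinarith [sq_nonneg (norm2 (x - D *ᵥ a))]

lemma norm2_residual_le (hlam : 0 ≤ lam) (ha : IsLassoMin lam D x a) :
    norm2 (x - D *ᵥ a) ≤ norm2 x := by
  have h := ha.lassoObj_le
  rw [lassoObj] at h
  have hpen : 0 ≤ lam * norm1 a := mul_nonneg hlam (norm1_nonneg a)
  exact (pow_le_pow_iff_left₀ (norm2_nonneg _) (norm2_nonneg _) two_ne_zero).mp (by linarith)

lemma sq_norm2_mulVec (ha : IsLassoMin lam D x a) :
    norm2 (D *ᵥ a) ^ 2 = norm2 x ^ 2 - 2 * lassoObj lam D x a := by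
  set P := dot x (D *ᵥ a)
  set W := norm2 (D *ᵥ a) ^ 2
  set q : ℝ → ℝ := fun t => (norm2 x ^ 2 - 2 * t * P + t ^ 2 * W) / 2 + t * (lam * norm1 a)
  have hq : ∀ t, 0 ≤ t → lassoObj lam D x (t • a) = q t := fun t ht => lassoObj_smul a ht
  -- rescaling `a` by `t ≥ 0` cannot decrease the objective, so `t = 1` is a critical point of `q`
  have hmin : IsLocalMin q 1 := by
    filter_upwards [Ioi_mem_nhds one_pos] with t ht
    rw [← hq t ht.le, ← hq 1 zero_le_one, one_smul]
    exact ha _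
  have hderiv : HasDerivAt q (W - P + lam * norm1 a) 1 := by
    have h := ((((hasDerivAt_id (1 : ℝ)).const_mul (2 * P)).const_sub (norm2 x ^ 2)).add
      ((hasDerivAt_pow 2 (1 : ℝ)).mul_const W)).div_const 2 |>.add
      ((hasDerivAt_id (1 : ℝ)).mul_const (lam * norm1 a))
    refine (h.congr_deriv (by norm_num; ring)).congr_of_eventuallyEq (.of_forall fun t => ?_)
    simp only [q, Pi.add_apply, id]
    ring
  have hcrit := hmin.hasDerivAt_eq_zero hderiv
  have hq1 := hq 1 zero_le_one
  rw [one_smul] at hq1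
  simp only [q] at hq1
  linarith

lemma norm2_mulVec_le (hlam : 0 ≤ lam) (ha : IsLassoMin lam D x a) :
    norm2 (D *ᵥ a) ≤ 2 * norm2 x := by
  have h := abs_norm2_sub_norm2_le (D *ᵥ a) x
  rw [norm2_sub_comm] at h
  linarith [(abs_le.mp h).2, ha.norm2_residual_le hlam]

lemma norm12_mul_norm1_le (hlam : 0 < lam) (ha : IsLassoMin lam D x a)
    (E : Matrix (Fin d) (Fin m) ℝ) :
    norm12 E * norm1 a ≤ norm12 E * norm2 x ^ 2 / (2 * lam) := by
  rw [le_div_iff₀ (by positivity)]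
  nlinarith [ha.lam_mul_norm1_le, norm12_nonneg E]

lemma lassoObj_sub_le (hlam : 0 ≤ lam) (ha : IsLassoMin lam E x a)
    (hb : IsLassoMin lam F x b) :
    lassoObj lam E x a - lassoObj lam F x b
      ≤ norm2 x * (norm12 (E - F) * norm1 b) + (norm12 (E - F) * norm1 b) ^ 2 / 2 := by
  set δ := norm12 (E - F) * norm1 b
  have hδ : 0 ≤ δ := mul_nonneg (norm12_nonneg _) (norm1_nonneg _)
  have hcross := norm2_residual_le_add E F x b
  calc lassoObj lam E x a - lassoObj lam F x b
      ≤ lassoObj lam E x b - lassoObj lam F x b := by linarith [ha b]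
    _ = (norm2 (x - E *ᵥ b) ^ 2 - norm2 (x - F *ᵥ b) ^ 2) / 2 := by
        simp only [lassoObj]; ring
    _ ≤ ((norm2 (x - F *ᵥ b) + δ) ^ 2 - norm2 (x - F *ᵥ b) ^ 2) / 2 := by
        gcongr; exact norm2_nonneg _
    _ = norm2 (x - F *ᵥ b) * δ + δ ^ 2 / 2 := by ring
    _ ≤ norm2 x * δ + δ ^ 2 / 2 := by gcongr; exact hb.norm2_residual_le hlam

lemma abs_sq_norm2_mulVec_sub_le (hlam : 0 < lam) (ha : IsLassoMin lam E x a)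
    (hb : IsLassoMin lam F x b) :
    |norm2 (E *ᵥ a) ^ 2 - norm2 (F *ᵥ b) ^ 2|
      ≤ 2 * norm2 x * (norm12 (E - F) * norm2 x ^ 2 / (2 * lam))
        + (norm12 (E - F) * norm2 x ^ 2 / (2 * lam)) ^ 2 := by
  set r := norm12 (E - F) * norm2 x ^ 2 / (2 * lam)
  have hmono : ∀ δ, 0 ≤ δ → δ ≤ r → norm2 x * δ + δ ^ 2 / 2 ≤ norm2 x * r + r ^ 2 / 2 :=
    fun δ hδ hδr => by gcongr; exact norm2_nonneg x
  have hab := ha.lassoObj_sub_le hlam.le hb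
  have hba := hb.lassoObj_sub_le hlam.le ha
  rw [norm12_sub_comm] at hba
  have hδb := hmono _ (mul_nonneg (norm12_nonneg _) (norm1_nonneg b))
    (hb.norm12_mul_norm1_le hlam _)
  have hδa := hmono _ (mul_nonneg (norm12_nonneg _) (norm1_nonneg a))
    (ha.norm12_mul_norm1_le hlam _)
  rw [ha.sq_norm2_mulVec, hb.sq_norm2_mulVec, abs_le]
  constructor <;> linarith

lemma abs_sq_norm2_mulVec_sub_sq_le (hlam : 0 < lam) (hb : IsLassoMin lam F x b)
    (E : Matrix (Fin d) (Fin m) ℝ) :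
    |norm2 (E *ᵥ b) ^ 2 - norm2 (F *ᵥ b) ^ 2|
      ≤ (norm12 (E - F) * norm2 x ^ 2 / (2 * lam))
        * (norm12 (E - F) * norm2 x ^ 2 / (2 * lam) + 4 * norm2 x) := by
  set G := norm2 (E *ᵥ b)
  set H := norm2 (F *ᵥ b)
  have hGH : |G - H| ≤ norm12 (E - F) * norm2 x ^ 2 / (2 * lam) :=
    (abs_norm2_mulVec_sub_le E F b).trans (hb.norm12_mul_norm1_le hlam _)
  have hH : |2 * H| ≤ 4 * norm2 x := by
    rw [abs_of_nonneg (by linarith [norm2_nonneg (F *ᵥ b)])]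
    linarith [hb.norm2_mulVec_le hlam.le]
  calc |G ^ 2 - H ^ 2| = |G - H| * |(G - H) + 2 * H| := by rw [← abs_mul]; ring_nf
    _ ≤ |G - H| * (|G - H| + |2 * H|) := by gcongr; exact abs_add_le _ _
    _ ≤ _ := by gcongr; exact (abs_nonneg _).trans hGH

end IsLassoMin

end Lasso

theorem reconstructor_norm_stability_same_dict_general {d m : ℕ} (lam : ℝ) (hlam : 0 < lam)
    (D Dt : Matrix (Fin d) (Fin m) ℝ)
    (hclose : norm12 (D - Dt) ≤ lam) (x : Fin d → ℝ)
    (a at' : Fin m → ℝ) (ha : IsLassoMin lam D x a) (hat : IsLassoMin lam Dt x at') :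
    |(norm2 (D.mulVec a))^2 - (norm2 (D.mulVec at'))^2|
      ≤ (norm2 x + 3) * (norm2 x)^3 * norm12 (D - Dt) / lam := by
  set X := norm2 x
  set r := norm12 (D - Dt) * X ^ 2 / (2 * lam)
  have hvalues := ha.abs_sq_norm2_mulVec_sub_le hlam hat
  have hdicts := hat.abs_sq_norm2_mulVec_sub_sq_le hlam D
  have hr : 0 ≤ r := div_nonneg (mul_nonneg (norm12_nonneg _) (sq_nonneg X)) (by positivity)
  have hrX : r ≤ X ^ 2 := by
    rw [div_le_iff₀ (by positivity)]
    nlinarith [sq_nonneg X]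
  have hrhs : (X + 3) * X ^ 3 * norm12 (D - Dt) / lam = 2 * r * (X ^ 2 + 3 * X) := by
    simp only [r]
    field_simp
  calc |norm2 (D *ᵥ a) ^ 2 - norm2 (D *ᵥ at') ^ 2|
      ≤ |norm2 (D *ᵥ a) ^ 2 - norm2 (Dt *ᵥ at') ^ 2|
        + |norm2 (D *ᵥ at') ^ 2 - norm2 (Dt *ᵥ at') ^ 2| := by
        rw [abs_sub_comm (norm2 (D *ᵥ at') ^ 2)]
        exact abs_sub_le _ _ _
    _ ≤ (2 * X * r + r ^ 2) + r * (r + 4 * X) := add_le_add hvalues hdicts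
    _ ≤ (X + 3) * X ^ 3 * norm12 (D - Dt) / lam := by
        rw [hrhs]
        nlinarith [mul_le_mul_of_nonneg_left hrX hr]

theorem reconstructor_norm_stability_same_dict {d m : ℕ} (lam : ℝ) (hlam : 0 < lam)
    (D Dt : Matrix (Fin d) (Fin m) ℝ) (hD : IsDictionary D) (hDt : IsDictionary Dt)
    (hclose : norm12 (D - Dt) ≤ lam) (x : Fin d → ℝ)
    (a at' : Fin m → ℝ) (ha : IsLassoMin lam D x a) (hat : IsLassoMin lam Dt x at') :
    |(norm2 (D.mulVec a))^2 - (norm2 (D.mulVec at'))^2|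
      ≤ (norm2 x + 3) * (norm2 x)^3 * norm12 (D - Dt) / lam :=
  reconstructor_norm_stability_same_dict_general lam hlam D Dt hclose x a at' ha hat
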